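/- Let $k \geq 1$, let $b_{j,l}$ and $\delta_{j,l}$ ($1 \le j,l \le k$) be complex numbers with $|b_{j,l}| \le M$ and $|\delta_{j,l}| \le \epsilon$ for all $j,l$. Then $|\det[b_{j,l}(1 + \delta_{j,l})] - \det[b_{j,l}]| \le ((1+\epsilon)^k - 1) \, k^{k/2} M^k$. -/

import Mathlib

/-!
Since `b j l * (1 + δ j l)` is the entry of `b ⊙ δ + b`, expanding the determinant multilinearly
in the rows writes the difference as a sum, over the nonempty sets `s` of rows, of determinants
whose rows in `s` come from `b ⊙ δ` (entries at most `M ε`) and whose other rows come from `b`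
(entries at most `M`). Each term is at most `k ^ (k / 2) * (M ε) ^ #s * M ^ (k - #s)` by the weak
Hadamard bound `‖det A‖ ≤ k ^ (k / 2) * ∏ i, c i` for rows bounded by `c i`; after scaling the rows
to entries of norm at most `1`, this is AM-GM for the eigenvalues of `Aᴴ * A`, whose sum (the
trace) is at most `k ^ 2`. The binomial theorem sums the bounds to `((1 + ε) ^ k - 1) * M ^ k`.
-/

open Matrix Finset

theorem Real.prod_le_pow_card_of_sum_le {ι : Type*} (s : Finset ι) {z : ι → ℝ} {a : ℝ}
    (hz : ∀ i ∈ s, 0 ≤ z i) (hsum : ∑ i ∈ s, z i ≤ #s * a) : ∏ i ∈ s, z i ≤ a ^ #s := by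
  rcases s.eq_empty_or_nonempty with rfl | hs
  · simp
  have hcard : (0 : ℝ) < #s := by exact_mod_cast hs.card_pos
  have amgm := Real.geom_mean_le_arith_mean_weighted s (fun _ => (#s : ℝ)⁻¹) z
    (fun _ _ => by positivity) (by simp [hcard.ne']) hz
  rw [Real.finsetProd_rpow s z hz, ← mul_sum] at amgm
  calc ∏ i ∈ s, z i = ((∏ i ∈ s, z i) ^ (#s : ℝ)⁻¹) ^ #s := by
        rw [← Real.rpow_natCast, ← Real.rpow_mul (prod_nonneg hz), inv_mul_cancel₀ hcard.ne',
          Real.rpow_one]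
    _ ≤ a ^ #s := by
        gcongr
        · exact Real.rpow_nonneg (prod_nonneg hz) _
        exact amgm.trans ((inv_mul_le_iff₀ hcard).mpr hsum)

variable {𝕜 n : Type*} [RCLike 𝕜] [Fintype n]

theorem Matrix.trace_conjTranspose_mul_self_eq_sum (A : Matrix n n 𝕜) :
    (Aᴴ * A).trace = ∑ i, ∑ j, ((‖A j i‖ ^ 2 : ℝ) : 𝕜) := by
  simp only [trace, diag, mul_apply, conjTranspose_apply, RCLike.star_def, RCLike.conj_mul]
  push_cast
  rfl

variable [DecidableEq n]

theorem Matrix.norm_det_sq_eq_prod_eigenvalues (A : Matrix n n 𝕜) :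
    ‖A.det‖ ^ 2 = ∏ i, (isHermitian_conjTranspose_mul_self A).eigenvalues i := by
  have h := (isHermitian_conjTranspose_mul_self A).det_eq_prod_eigenvalues
  rw [det_mul, det_conjTranspose, RCLike.star_def, RCLike.conj_mul] at h
  exact_mod_cast h

theorem Matrix.sum_eigenvalues_conjTranspose_mul_self (A : Matrix n n 𝕜) :
    ∑ i, (isHermitian_conjTranspose_mul_self A).eigenvalues i = ∑ i, ∑ j, ‖A j i‖ ^ 2 := by
  have h := (isHermitian_conjTranspose_mul_self A).trace_eq_sum_eigenvalues
  rw [trace_conjTranspose_mul_self_eq_sum] at h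
  exact_mod_cast h.symm

theorem Matrix.norm_det_le_of_norm_le_one {A : Matrix n n 𝕜} (hA : ∀ i j, ‖A i j‖ ≤ 1) :
    ‖A.det‖ ≤ (Fintype.card n : ℝ) ^ ((Fintype.card n : ℝ) / 2) := by
  set N : ℝ := (Fintype.card n : ℝ) with hN
  have hsum :
      ∑ i, (isHermitian_conjTranspose_mul_self A).eigenvalues i ≤ #(univ : Finset n) * N := by
    rw [sum_eigenvalues_conjTranspose_mul_self, card_univ]
    calc ∑ i, ∑ j, ‖A j i‖ ^ 2 ≤ ∑ _i : n, ∑ _j : n, (1 : ℝ) := by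
          gcongr with i _ j _
          exact pow_le_one₀ (norm_nonneg _) (hA j i)
      _ = N * N := by simp [N]
  have hsq : ‖A.det‖ ^ 2 ≤ N ^ Fintype.card n := by
    rw [norm_det_sq_eq_prod_eigenvalues, ← card_univ]
    exact Real.prod_le_pow_card_of_sum_le _
      (fun i _ => eigenvalues_conjTranspose_mul_self_nonneg A i) hsum
  calc ‖A.det‖ = √(‖A.det‖ ^ 2) := (Real.sqrt_sq (norm_nonneg _)).symm
    _ ≤ √(N ^ Fintype.card n) := Real.sqrt_le_sqrt hsq
    _ = N ^ (N / 2) := by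
        rw [Real.sqrt_eq_rpow, ← Real.rpow_natCast, ← Real.rpow_mul (by positivity), ← hN,
          one_div, div_eq_mul_inv]

theorem Matrix.norm_det_le_of_norm_row_le {A : Matrix n n 𝕜} {c : n → ℝ}
    (hA : ∀ i j, ‖A i j‖ ≤ c i) :
    ‖A.det‖ ≤ (Fintype.card n : ℝ) ^ ((Fintype.card n : ℝ) / 2) * ∏ i, c i := by
  have hc : ∀ i, 0 ≤ c i := fun i => (norm_nonneg _).trans (hA i i)
  -- a row with `c i = 0` vanishes, so the junk value `0⁻¹ = 0` does no harm
  set B : Matrix n n 𝕜 := of fun i j => (c i : 𝕜)⁻¹ * A i j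
  have hAB : A = diagonal (fun i => (c i : 𝕜)) * B := by
    ext i j
    rcases (hc i).eq_or_lt with h | h
    · simp [B, diagonal_mul, norm_le_zero_iff.mp (h ▸ hA i j), ← h]
    · simp [B, diagonal_mul, h.ne']
  have hB : ∀ i j, ‖B i j‖ ≤ 1 := by
    intro i j
    rcases (hc i).eq_or_lt with h | h
    · simp [B, ← h]
    · simpa [B, abs_of_pos h, inv_mul_le_one₀ h] using hA i j
  rw [hAB, det_mul, det_diagonal, norm_mul, norm_prod, mul_comm]
  simp only [RCLike.norm_ofReal, abs_of_nonneg (hc _)]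
  exact mul_le_mul_of_nonneg_right (norm_det_le_of_norm_le_one hB) (prod_nonneg fun i _ => hc i)

theorem Matrix.det_add_eq_sum_det_ite {R : Type*} [CommRing R] (A B : Matrix n n R) :
    (A + B).det = ∑ s : Finset n, (of fun i => if i ∈ s then A i else B i).det :=
  detRowAlternating.map_add_univ A B

theorem Matrix.norm_det_ite_le {A B : Matrix n n 𝕜} {a b : ℝ} (hA : ∀ i j, ‖A i j‖ ≤ a)
    (hB : ∀ i j, ‖B i j‖ ≤ b) (s : Finset n) :
    ‖(of fun i => if i ∈ s then A i else B i).det‖ ≤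
      (Fintype.card n : ℝ) ^ ((Fintype.card n : ℝ) / 2) *
        (a ^ #s * b ^ (Fintype.card n - #s)) := by
  have hrow :
      ∀ i j, ‖(of fun i => if i ∈ s then A i else B i) i j‖ ≤ if i ∈ s then a else b := by
    intro i j
    by_cases hi : i ∈ s
    · simpa [hi] using hA i j
    · simpa [hi] using hB i j
  refine (norm_det_le_of_norm_row_le hrow).trans_eq ?_
  rw [prod_ite, prod_const, prod_const, filter_mem_eq_inter, univ_inter, filter_not,
    filter_mem_eq_inter, univ_inter, card_sdiff_of_subset (subset_univ s), card_univ]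

theorem Matrix.norm_det_add_sub_det_le {A B : Matrix n n 𝕜} {a b : ℝ} (hA : ∀ i j, ‖A i j‖ ≤ a)
    (hB : ∀ i j, ‖B i j‖ ≤ b) :
    ‖(A + B).det - B.det‖ ≤ ((a + b) ^ Fintype.card n - b ^ Fintype.card n) *
      (Fintype.card n : ℝ) ^ ((Fintype.card n : ℝ) / 2) := by
  have hexpand : (A + B).det - B.det =
      ∑ s ∈ univ.erase (∅ : Finset n), (of fun i => if i ∈ s then A i else B i).det := by
    rw [det_add_eq_sum_det_ite, ← add_sum_erase _ _ (mem_univ ∅), add_sub_right_comm]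
    simp only [notMem_empty, if_false]
    exact add_eq_right.mpr (sub_self _)
  have hbinom : ∑ s ∈ univ.erase (∅ : Finset n), a ^ #s * b ^ (Fintype.card n - #s) =
      (a + b) ^ Fintype.card n - b ^ Fintype.card n := by
    rw [sum_erase_eq_sub (mem_univ _), Fintype.sum_pow_mul_eq_add_pow]
    simp
  rw [hexpand, ← hbinom, sum_mul]
  refine (norm_sum_le _ _).trans (sum_le_sum fun s _ => ?_)
  rw [mul_comm]
  exact norm_det_ite_le hA hB s

theorem det_perturbation_bound_general (k : ℕ)
    (b δ : Matrix (Fin k) (Fin k) ℂ) (M ε : ℝ)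
    (hb : ∀ j l, ‖b j l‖ ≤ M)
    (hδ : ∀ j l, ‖δ j l‖ ≤ ε) :
    ‖(Matrix.of fun j l => b j l * (1 + δ j l)).det - b.det‖ ≤
      ((1 + ε) ^ k - 1) * (k : ℝ) ^ ((k : ℝ) / 2) * M ^ k := by
  have hsplit : (Matrix.of fun j l => b j l * (1 + δ j l)) = b ⊙ δ + b := by
    ext j l
    simp only [of_apply, Matrix.add_apply, hadamard_apply]
    ring
  have hbδ : ∀ j l, ‖(b ⊙ δ) j l‖ ≤ M * ε := fun j l => by
    rw [hadamard_apply, norm_mul]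
    exact mul_le_mul (hb j l) (hδ j l) (norm_nonneg _) ((norm_nonneg _).trans (hb j l))
  calc _ ≤ ((M * ε + M) ^ k - M ^ k) * (k : ℝ) ^ ((k : ℝ) / 2) := by
        simpa [hsplit] using norm_det_add_sub_det_le hbδ hb
    _ = _ := by
        rw [show M * ε + M = M * (1 + ε) by ring, mul_pow]
        ring

theorem det_perturbation_bound (k : ℕ) (hk : 1 ≤ k)
    (b δ : Matrix (Fin k) (Fin k) ℂ) (M ε : ℝ) (hM : 0 ≤ M) (hε : 0 ≤ ε)
    (hb : ∀ j l, ‖b j l‖ ≤ M)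
    (hδ : ∀ j l, ‖δ j l‖ ≤ ε) :
    ‖(Matrix.of fun j l => b j l * (1 + δ j l)).det - b.det‖ ≤
      ((1 + ε) ^ k - 1) * (k : ℝ) ^ ((k : ℝ) / 2) * M ^ k :=
  det_perturbation_bound_general k b δ M ε hb hδ
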